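/- (Compositionality of security, unbounded time) Let 𝕊 and 𝕊′ be quantum systems with disjoint command sets C ∩ C′ = ∅, and let ↝ (on A) and ↝′ (on A′) be compatible policies. Then K(𝕊 ⊗ 𝕊′, ↝ ∪ ↝′) ≤ K(𝕊, ↝) + K(𝕊′, ↝′). -/

import Mathlib

open scoped Classical ComplexOrder
open Matrix Kronecker

noncomputable section

/-- A density operator: positive semidefinite with trace 1. -/
def IsDensity {d : Type} [Fintype d] [DecidableEq d] (ρ : Matrix d d ℂ) : Prop :=
  ρ.PosSemidef ∧ ρ.trace = 1

/-- A super-operator: a linear, positive, trace-preserving map on matrices. -/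
def IsSuperOp {d : Type} [Fintype d] [DecidableEq d]
    (F : Matrix d d ℂ → Matrix d d ℂ) : Prop :=
  IsLinearMap ℂ F ∧ (∀ ρ : Matrix d d ℂ, ρ.PosSemidef → (F ρ).PosSemidef) ∧
    (∀ ρ : Matrix d d ℂ, (F ρ).trace = ρ.trace)

/-- A finite family of matrices (the data of a measurement). -/
structure PMeas (d : Type) where
  m : ℕ
  E : Fin m → Matrix d d ℂ

/-- The family is a POVM: positive semidefinite elements summing to the identity. -/
def PMeas.IsPOVM {d : Type} [Fintype d] [DecidableEq d] (P : PMeas d) : Prop :=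
  (∀ i, (P.E i).PosSemidef) ∧ ∑ i, P.E i = 1

/-- The distance between outcome distributions of a measurement on two states. -/
def dE {d : Type} [Fintype d] (P : PMeas d) (ρ σ : Matrix d d ℂ) : ℝ :=
  (1 / 2) * ∑ i, ‖(P.E i * ρ).trace - (P.E i * σ).trace‖

/-- The measurement pseudo-distance induced by a set of measurements. -/
def dM {d : Type} [Fintype d] (M : Set (PMeas d)) (ρ σ : Matrix d d ℂ) : ℝ :=
  sSup { x | ∃ P ∈ M, x = dE P ρ σ }

/-- A quantum system: initial state, agents, commands, super-operators, measurements. -/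
structure QSystem (Agent Cmd d : Type) where
  ρ0 : Matrix d d ℂ
  A : Set Agent
  C : Set Cmd
  Ecmd : Agent → Cmd → Matrix d d ℂ → Matrix d d ℂ
  M : Agent → Set (PMeas d)

/-- Well-formedness: the initial state is a density operator, commands act as
super-operators, and agents measure with POVMs. -/
def QSystem.WellFormed {Agent Cmd d : Type} [Fintype d] [DecidableEq d]
    (S : QSystem Agent Cmd d) : Prop :=
  IsDensity S.ρ0 ∧ (∀ a ∈ S.A, ∀ c ∈ S.C, IsSuperOp (S.Ecmd a c)) ∧
    (∀ a ∈ S.A, ∀ P ∈ S.M a, P.IsPOVM)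

/-- Execution of a finite action sequence (composition of super-operators, in order). -/
def QSystem.run {Agent Cmd d : Type} (S : QSystem Agent Cmd d)
    (α : List (Agent × Cmd)) (ρ : Matrix d d ℂ) : Matrix d d ℂ :=
  α.foldl (fun τ p => S.Ecmd p.1 p.2 τ) ρ

/-- A sequence over A × C. -/
def QSystem.Valid {Agent Cmd d : Type} (S : QSystem Agent Cmd d)
    (α : List (Agent × Cmd)) : Prop :=
  ∀ p ∈ α, p.1 ∈ S.A ∧ p.2 ∈ S.C

/-- `purge G D α` deletes from `α` every pair `(a, c)` with `a ∈ G` and `c ∈ D`. -/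
def purge {Agent Cmd : Type} (G : Set Agent) (D : Set Cmd) :
    List (Agent × Cmd) → List (Agent × Cmd)
  | [] => []
  | p :: rest => if p.1 ∈ G ∧ p.2 ∈ D then purge G D rest else p :: purge G D rest

/-- A reachable density operator. -/
def QSystem.Reachable {Agent Cmd d : Type} (S : QSystem Agent Cmd d)
    (ρ : Matrix d d ℂ) : Prop :=
  ∃ α, S.Valid α ∧ S.run α S.ρ0 = ρ

/-- `∇ a`: the set of agents from which information may not flow to `a`. -/
def nabla {Agent : Type} (pol : Agent → Agent → Prop) (a : Agent) : Set Agent :=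
  { b | ¬ pol b a }

/-- The security degree `K(𝕊,↝)`. -/
def Kdeg {Agent Cmd d : Type} [Fintype d] (S : QSystem Agent Cmd d)
    (pol : Agent → Agent → Prop) : ℝ :=
  sSup { x | ∃ a ∈ S.A, ∃ α, S.Valid α ∧
    x = dM (S.M a) (S.run α S.ρ0) (S.run (purge (nabla pol a) Set.univ α) S.ρ0) }

/-- The `t`-bounded security degree `K_t(𝕊,↝)`. -/
def Kt {Agent Cmd d : Type} [Fintype d] (S : QSystem Agent Cmd d)
    (pol : Agent → Agent → Prop) (t : ℕ) : ℝ :=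
  sSup { x | ∃ a ∈ S.A, ∃ α, S.Valid α ∧ α.length ≤ t ∧
    x = dM (S.M a) (S.run α S.ρ0) (S.run (purge (nabla pol a) Set.univ α) S.ρ0) }

/-- The interference degree `Int(G₁, D | G₂)`. -/
def IntDeg {Agent Cmd d : Type} [Fintype d] (S : QSystem Agent Cmd d)
    (G1 : Set Agent) (D : Set Cmd) (G2 : Set Agent) : ℝ :=
  sSup { x | ∃ a ∈ G2, ∃ α, S.Valid α ∧
    x = dM (S.M a) (S.run α S.ρ0) (S.run (purge G1 D α) S.ρ0) }

/-- Trace distance `d(ρ,σ) = (1/2)·tr √((ρ−σ)†(ρ−σ))`. -/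
def traceDist {d : Type} [Fintype d] [DecidableEq d] (ρ σ : Matrix d d ℂ) : ℝ :=
  (1 / 2) * (((Matrix.posSemidef_conjTranspose_mul_self (ρ - σ)).1.eigenvectorUnitary.1 *
    Matrix.diagonal (((↑) : ℝ → ℂ) ∘ (√·) ∘ (Matrix.posSemidef_conjTranspose_mul_self (ρ - σ)).1.eigenvalues) *
    (star (Matrix.posSemidef_conjTranspose_mul_self (ρ - σ)).1.eigenvectorUnitary : Matrix d d ℂ)).trace).re

end
noncomputable section

/-- Lift a measurement on the first subsystem to the composite system: `E_λ ↦ E_λ ⊗ I`. -/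
def PMeas.liftLeft {d1 d2 : Type} [Fintype d2] [DecidableEq d2]
    (P : PMeas d1) : PMeas (d1 × d2) where
  m := P.m
  E := fun i => P.E i ⊗ₖ (1 : Matrix d2 d2 ℂ)

/-- Lift a measurement on the second subsystem to the composite system: `E_λ ↦ I ⊗ E_λ`. -/
def PMeas.liftRight {d1 d2 : Type} [Fintype d1] [DecidableEq d1]
    (P : PMeas d2) : PMeas (d1 × d2) where
  m := P.m
  E := fun i => (1 : Matrix d1 d1 ℂ) ⊗ₖ P.E i

/-- The map `𝓔 ⊗ id` on the composite system, for `𝓔` acting on the first factor. -/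
def superLiftLeft {d1 d2 : Type} (F : Matrix d1 d1 ℂ → Matrix d1 d1 ℂ) :
    Matrix (d1 × d2) (d1 × d2) ℂ → Matrix (d1 × d2) (d1 × d2) ℂ :=
  fun σ => Matrix.of fun p q =>
    F (Matrix.of fun i j => σ (i, p.2) (j, q.2)) p.1 q.1

/-- The map `id ⊗ 𝓔′` on the composite system, for `𝓔′` acting on the second factor. -/
def superLiftRight {d1 d2 : Type} (F : Matrix d2 d2 ℂ → Matrix d2 d2 ℂ) :
    Matrix (d1 × d2) (d1 × d2) ℂ → Matrix (d1 × d2) (d1 × d2) ℂ :=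
  fun σ => Matrix.of fun p q =>
    F (Matrix.of fun k l => σ (p.1, k) (q.1, l)) p.2 q.2

/-- The composition `𝕊 ⊗ 𝕊′` of two quantum systems. -/
def QSystem.comp {Agent Cmd d1 d2 : Type}
    [Fintype d1] [DecidableEq d1] [Fintype d2] [DecidableEq d2]
    (S : QSystem Agent Cmd d1) (S' : QSystem Agent Cmd d2) :
    QSystem Agent Cmd (d1 × d2) where
  ρ0 := S.ρ0 ⊗ₖ S'.ρ0
  A := S.A ∪ S'.A
  C := S.C ∪ S'.C
  Ecmd := fun a c =>
    if a ∈ S.A ∧ c ∈ S.C then superLiftLeft (S.Ecmd a c)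
    else if a ∈ S'.A ∧ c ∈ S'.C then superLiftRight (S'.Ecmd a c)
    else id
  M := fun a =>
    (if a ∈ S.A then PMeas.liftLeft '' S.M a else ∅) ∪
    (if a ∈ S'.A then PMeas.liftRight '' S'.M a else ∅)

/-- Two policies are compatible if they agree on common agents. -/
def Compatible {Agent : Type} (A A' : Set Agent)
    (pol pol' : Agent → Agent → Prop) : Prop :=
  ∀ a ∈ A ∩ A', ∀ b ∈ A ∩ A', (pol a b ↔ pol' a b)

/-- The union `↝ ∪ ↝′` of a policy on `A` and a policy on `A′`. -/
def polUnion {Agent : Type} (A A' : Set Agent)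
    (pol pol' : Agent → Agent → Prop) : Agent → Agent → Prop :=
  fun a b => (a ∈ A ∧ b ∈ A ∧ pol a b) ∨ (a ∈ A' ∧ b ∈ A' ∧ pol' a b)

end

/-! The composite system runs on product states `X ⊗ Y` exactly as the two components run,
each on its own actions: with disjoint command sets an action of `𝕊 ⊗ 𝕊′` drives at most one
factor. Every measurement of the composite system is lifted from one factor, and a lifted
measurement only sees that factor, because the other one is a density operator of trace one.
On the factor it sees, the purged run of `𝕊 ⊗ 𝕊′` restricts to the purged run of that component
with respect to its own policy, by compatibility, so each measured distance is bounded by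
`K(𝕊, ↝)` or by `K(𝕊′, ↝′)`. -/

open scoped MatrixOrder

section Measurement

variable {d : Type} [Fintype d]

lemma dE_nonneg (P : PMeas d) (ρ σ : Matrix d d ℂ) : 0 ≤ dE P ρ σ :=
  mul_nonneg (by norm_num) (Finset.sum_nonneg fun _ _ => norm_nonneg _)

lemma dM_nonneg (M : Set (PMeas d)) (ρ σ : Matrix d d ℂ) : 0 ≤ dM M ρ σ :=
  Real.sSup_nonneg (by rintro _ ⟨P, -, rfl⟩; exact dE_nonneg P ρ σ)

variable [DecidableEq d]

lemma Matrix.PosSemidef.trace_mul_nonneg {A B : Matrix d d ℂ} (hA : A.PosSemidef)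
    (hB : B.PosSemidef) : 0 ≤ (A * B).trace := by
  obtain ⟨C, rfl⟩ := CStarAlgebra.nonneg_iff_eq_star_mul_self.mp hA.nonneg
  rw [Matrix.mul_assoc, Matrix.trace_mul_comm]
  exact (hB.mul_mul_conjTranspose_same C).trace_nonneg

lemma PMeas.IsPOVM.sum_norm_trace_mul {P : PMeas d} (hP : P.IsPOVM) {ρ : Matrix d d ℂ}
    (hρ : IsDensity ρ) : ∑ i, ‖(P.E i * ρ).trace‖ = 1 := by
  calc ∑ i, ‖(P.E i * ρ).trace‖
      = (∑ i, (P.E i * ρ).trace).re := by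
        rw [Complex.re_sum]
        exact Finset.sum_congr rfl fun i _ =>
          (Complex.re_eq_norm.mpr ((hP.1 i).trace_mul_nonneg hρ.1)).symm
    _ = 1 := by rw [← Matrix.trace_sum, ← Finset.sum_mul, hP.2, Matrix.one_mul, hρ.2,
        Complex.one_re]

lemma PMeas.IsPOVM.dE_le_one {P : PMeas d} (hP : P.IsPOVM) {ρ σ : Matrix d d ℂ}
    (hρ : IsDensity ρ) (hσ : IsDensity σ) : dE P ρ σ ≤ 1 := by
  calc dE P ρ σ
      ≤ (1 / 2) * ∑ i, (‖(P.E i * ρ).trace‖ + ‖(P.E i * σ).trace‖) := by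
        unfold dE
        gcongr with i
        exact norm_sub_le _ _
    _ = 1 := by
        rw [Finset.sum_add_distrib, hP.sum_norm_trace_mul hρ, hP.sum_norm_trace_mul hσ]
        norm_num

lemma dM_le_one {M : Set (PMeas d)} (hM : ∀ P ∈ M, P.IsPOVM) {ρ σ : Matrix d d ℂ}
    (hρ : IsDensity ρ) (hσ : IsDensity σ) : dM M ρ σ ≤ 1 :=
  Real.sSup_le (by rintro _ ⟨P, hP, rfl⟩; exact (hM P hP).dE_le_one hρ hσ) zero_le_one

lemma dE_le_dM {M : Set (PMeas d)} (hM : ∀ P ∈ M, P.IsPOVM) {ρ σ : Matrix d d ℂ}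
    (hρ : IsDensity ρ) (hσ : IsDensity σ) {P : PMeas d} (hP : P ∈ M) :
    dE P ρ σ ≤ dM M ρ σ :=
  le_csSup ⟨1, by rintro _ ⟨Q, hQ, rfl⟩; exact (hM Q hQ).dE_le_one hρ hσ⟩ ⟨P, hP, rfl⟩

lemma IsSuperOp.isDensity {F : Matrix d d ℂ → Matrix d d ℂ} (hF : IsSuperOp F)
    {ρ : Matrix d d ℂ} (hρ : IsDensity ρ) : IsDensity (F ρ) :=
  ⟨hF.2.1 ρ hρ.1, (hF.2.2 ρ).trans hρ.2⟩

end Measurement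

section Purge

variable {Agent Cmd : Type}

lemma purge_univ_eq_filter (G : Set Agent) (α : List (Agent × Cmd)) :
    purge G Set.univ α = α.filter fun p => decide (p.1 ∉ G) := by
  induction α with
  | nil => rfl
  | cons p α ih => by_cases h : p.1 ∈ G <;> simp [purge, h, ih]

lemma filter_purge_univ {G G' : Set Agent} {f : Agent × Cmd → Bool} {α : List (Agent × Cmd)}
    (h : ∀ p ∈ α, f p → (p.1 ∈ G ↔ p.1 ∈ G')) :
    (purge G Set.univ α).filter f = purge G' Set.univ (α.filter f) := by
  rw [purge_univ_eq_filter, purge_univ_eq_filter, List.filter_filter, List.filter_filter]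
  refine List.filter_congr fun p hp => ?_
  cases hf : f p <;> simp [hf, h p hp]

end Purge

section Policy

variable {Agent : Type}

lemma polUnion_iff_left {A A' : Set Agent} {pol pol' : Agent → Agent → Prop}
    (hc : Compatible A A' pol pol') {a b : Agent} (ha : a ∈ A) (hb : b ∈ A) :
    polUnion A A' pol pol' a b ↔ pol a b := by
  refine ⟨?_, fun h => Or.inl ⟨ha, hb, h⟩⟩
  rintro (⟨-, -, h⟩ | ⟨ha', hb', h⟩)
  exacts [h, (hc a ⟨ha, ha'⟩ b ⟨hb, hb'⟩).mpr h]

lemma polUnion_iff_right {A A' : Set Agent} {pol pol' : Agent → Agent → Prop}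
    (hc : Compatible A A' pol pol') {a b : Agent} (ha : a ∈ A') (hb : b ∈ A') :
    polUnion A A' pol pol' a b ↔ pol' a b := by
  refine ⟨?_, fun h => Or.inr ⟨ha, hb, h⟩⟩
  rintro (⟨ha', hb', h⟩ | ⟨-, -, h⟩)
  exacts [(hc a ⟨ha', ha⟩ b ⟨hb', hb⟩).mp h, h]

end Policy

namespace QSystem

variable {Agent Cmd d : Type}

noncomputable def restrict (S : QSystem Agent Cmd d) (α : List (Agent × Cmd)) :
    List (Agent × Cmd) :=
  α.filter fun p => decide (p.1 ∈ S.A ∧ p.2 ∈ S.C)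

lemma valid_restrict (S : QSystem Agent Cmd d) (α : List (Agent × Cmd)) :
    S.Valid (S.restrict α) :=
  fun p hp => by simpa using (List.mem_filter.mp hp).2

lemma valid_purge {S : QSystem Agent Cmd d} {α : List (Agent × Cmd)} (hα : S.Valid α)
    (G : Set Agent) : S.Valid (purge G Set.univ α) :=
  fun p hp => hα p (List.mem_of_mem_filter (purge_univ_eq_filter G α ▸ hp))

lemma run_append (S : QSystem Agent Cmd d) (α β : List (Agent × Cmd)) (ρ : Matrix d d ℂ) :
    S.run (α ++ β) ρ = S.run β (S.run α ρ) :=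
  List.foldl_append

lemma restrict_purge_nabla_polUnion_left (S : QSystem Agent Cmd d) {A' : Set Agent}
    {pol pol' : Agent → Agent → Prop} (hc : Compatible S.A A' pol pol') {a : Agent}
    (ha : a ∈ S.A) (α : List (Agent × Cmd)) :
    S.restrict (purge (nabla (polUnion S.A A' pol pol') a) Set.univ α) =
      purge (nabla pol a) Set.univ (S.restrict α) :=
  filter_purge_univ fun _ _ hp =>
    not_congr (polUnion_iff_left hc (of_decide_eq_true hp).1 ha)

lemma restrict_purge_nabla_polUnion_right (S : QSystem Agent Cmd d) {A : Set Agent}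
    {pol pol' : Agent → Agent → Prop} (hc : Compatible A S.A pol pol') {a : Agent}
    (ha : a ∈ S.A) (α : List (Agent × Cmd)) :
    S.restrict (purge (nabla (polUnion A S.A pol pol') a) Set.univ α) =
      purge (nabla pol' a) Set.univ (S.restrict α) :=
  filter_purge_univ fun _ _ hp =>
    not_congr (polUnion_iff_right hc (of_decide_eq_true hp).1 ha)

lemma Kdeg_nonneg [Fintype d] (S : QSystem Agent Cmd d) (pol : Agent → Agent → Prop) :
    0 ≤ Kdeg S pol :=
  Real.sSup_nonneg (by rintro _ ⟨a, -, α, -, rfl⟩; exact dM_nonneg _ _ _)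

variable [Fintype d] [DecidableEq d] {S : QSystem Agent Cmd d}

lemma run_isDensity (hS : S.WellFormed) {α : List (Agent × Cmd)} (hα : S.Valid α)
    {ρ : Matrix d d ℂ} (hρ : IsDensity ρ) : IsDensity (S.run α ρ) := by
  induction α generalizing ρ with
  | nil => exact hρ
  | cons p α ih =>
    have hp := hα p List.mem_cons_self
    exact ih (fun q hq => hα q (List.mem_cons_of_mem p hq))
      ((hS.2.1 p.1 hp.1 p.2 hp.2).isDensity hρ)

lemma isDensity_run_restrict (hS : S.WellFormed) (α : List (Agent × Cmd)) :
    IsDensity (S.run (S.restrict α) S.ρ0) :=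
  run_isDensity hS (S.valid_restrict α) hS.1

lemma dM_le_Kdeg (hS : S.WellFormed) (pol : Agent → Agent → Prop) {a : Agent}
    (ha : a ∈ S.A) {α : List (Agent × Cmd)} (hα : S.Valid α) :
    dM (S.M a) (S.run α S.ρ0) (S.run (purge (nabla pol a) Set.univ α) S.ρ0) ≤ Kdeg S pol := by
  refine le_csSup ⟨1, ?_⟩ ⟨a, ha, α, hα, rfl⟩
  rintro _ ⟨b, hb, β, hβ, rfl⟩
  exact dM_le_one (hS.2.2 b hb) (run_isDensity hS hβ hS.1)
    (run_isDensity hS (valid_purge hβ _) hS.1)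

end QSystem

section Composition

variable {d1 d2 : Type}

lemma superLiftLeft_kronecker {F : Matrix d1 d1 ℂ → Matrix d1 d1 ℂ} (hF : IsLinearMap ℂ F)
    (X : Matrix d1 d1 ℂ) (Y : Matrix d2 d2 ℂ) : superLiftLeft F (X ⊗ₖ Y) = F X ⊗ₖ Y := by
  ext ⟨i, k⟩ ⟨j, l⟩
  have hslice : (Matrix.of fun i' j' => X i' j' * Y k l) = Y k l • X := by
    ext; simp [mul_comm]
  simp [superLiftLeft, hslice, hF.map_smul, mul_comm]

lemma superLiftRight_kronecker {F : Matrix d2 d2 ℂ → Matrix d2 d2 ℂ} (hF : IsLinearMap ℂ F)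
    (X : Matrix d1 d1 ℂ) (Y : Matrix d2 d2 ℂ) : superLiftRight F (X ⊗ₖ Y) = X ⊗ₖ F Y := by
  ext ⟨i, k⟩ ⟨j, l⟩
  have hslice : (Matrix.of fun k' l' => X i j * Y k' l') = X i j • Y := by
    ext; simp
  simp [superLiftRight, hslice, hF.map_smul]

lemma dE_liftLeft_kronecker [Fintype d1] [Fintype d2] [DecidableEq d2] (P : PMeas d1)
    {X X' : Matrix d1 d1 ℂ} {Y Y' : Matrix d2 d2 ℂ} (hY : Y.trace = 1) (hY' : Y'.trace = 1) :
    dE P.liftLeft (X ⊗ₖ Y) (X' ⊗ₖ Y') = dE P X X' := by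
  simp only [dE, PMeas.liftLeft, ← Matrix.mul_kronecker_mul, Matrix.trace_kronecker,
    Matrix.one_mul, hY, hY', mul_one]
  rfl

lemma dE_liftRight_kronecker [Fintype d1] [DecidableEq d1] [Fintype d2] (P : PMeas d2)
    {X X' : Matrix d1 d1 ℂ} {Y Y' : Matrix d2 d2 ℂ} (hX : X.trace = 1) (hX' : X'.trace = 1) :
    dE P.liftRight (X ⊗ₖ Y) (X' ⊗ₖ Y') = dE P Y Y' := by
  simp only [dE, PMeas.liftRight, ← Matrix.mul_kronecker_mul, Matrix.trace_kronecker,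
    hX, hX', one_mul]
  rfl

namespace QSystem

variable [Fintype d1] [DecidableEq d1] [Fintype d2] [DecidableEq d2]
  {Agent Cmd : Type} {S : QSystem Agent Cmd d1} {S' : QSystem Agent Cmd d2}

lemma comp_Ecmd_kronecker (hS : S.WellFormed) (hS' : S'.WellFormed) (hC : S.C ∩ S'.C = ∅)
    (a : Agent) (c : Cmd) (X : Matrix d1 d1 ℂ) (Y : Matrix d2 d2 ℂ) :
    (S.comp S').Ecmd a c (X ⊗ₖ Y) =
      S.run (S.restrict [(a, c)]) X ⊗ₖ S'.run (S'.restrict [(a, c)]) Y := by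
  by_cases h : a ∈ S.A ∧ c ∈ S.C
  · have h' : ¬(a ∈ S'.A ∧ c ∈ S'.C) := fun h' =>
      (Set.eq_empty_iff_forall_notMem.mp hC) c ⟨h.2, h'.2⟩
    simp [comp, restrict, run, h, h', superLiftLeft_kronecker (hS.2.1 a h.1 c h.2).1]
  · by_cases h' : a ∈ S'.A ∧ c ∈ S'.C
    · simp [comp, restrict, run, h, h', superLiftRight_kronecker (hS'.2.1 a h'.1 c h'.2).1]
    · simp [comp, restrict, run, h, h']

lemma comp_run_kronecker (hS : S.WellFormed) (hS' : S'.WellFormed) (hC : S.C ∩ S'.C = ∅)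
    (α : List (Agent × Cmd)) (X : Matrix d1 d1 ℂ) (Y : Matrix d2 d2 ℂ) :
    (S.comp S').run α (X ⊗ₖ Y) = S.run (S.restrict α) X ⊗ₖ S'.run (S'.restrict α) Y := by
  induction α generalizing X Y with
  | nil => rfl
  | cons p α ih =>
    have hsplit : ∀ {d : Type} (T : QSystem Agent Cmd d), T.restrict (p :: α) =
        T.restrict [p] ++ T.restrict α := fun T => List.filter_append [p] α
    change (S.comp S').run α ((S.comp S').Ecmd p.1 p.2 (X ⊗ₖ Y)) = _
    rw [comp_Ecmd_kronecker hS hS' hC, ih, hsplit S, hsplit S', run_append, run_append]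

lemma dM_comp_kronecker_le (hS : S.WellFormed) (hS' : S'.WellFormed) {a : Agent}
    {X X' : Matrix d1 d1 ℂ} {Y Y' : Matrix d2 d2 ℂ} (hX : IsDensity X) (hX' : IsDensity X')
    (hY : IsDensity Y) (hY' : IsDensity Y') {c : ℝ} (hc : 0 ≤ c)
    (hleft : a ∈ S.A → dM (S.M a) X X' ≤ c) (hright : a ∈ S'.A → dM (S'.M a) Y Y' ≤ c) :
    dM ((S.comp S').M a) (X ⊗ₖ Y) (X' ⊗ₖ Y') ≤ c := by
  refine Real.sSup_le ?_ hc
  rintro _ ⟨P, hP | hP, rfl⟩ <;> split_ifs at hP with ha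
  · obtain ⟨Q, hQ, rfl⟩ := hP
    rw [dE_liftLeft_kronecker Q hY.2 hY'.2]
    exact (dE_le_dM (hS.2.2 a ha) hX hX' hQ).trans (hleft ha)
  · exact hP.elim
  · obtain ⟨Q, hQ, rfl⟩ := hP
    rw [dE_liftRight_kronecker Q hX.2 hX'.2]
    exact (dE_le_dM (hS'.2.2 a ha) hY hY' hQ).trans (hright ha)
  · exact hP.elim

end QSystem

end Composition

open QSystem in
theorem compositionality_K_general {Agent Cmd : Type} {n n' : ℕ}
    (S : QSystem Agent Cmd (Fin n)) (S' : QSystem Agent Cmd (Fin n'))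
    (hS : S.WellFormed) (hS' : S'.WellFormed)
    (hC : S.C ∩ S'.C = ∅)
    (pol pol' : Agent → Agent → Prop)
    (hcompat : Compatible S.A S'.A pol pol') :
    Kdeg (S.comp S') (polUnion S.A S'.A pol pol') ≤ Kdeg S pol + Kdeg S' pol' := by
  have hK : 0 ≤ Kdeg S pol + Kdeg S' pol' := add_nonneg (Kdeg_nonneg S pol) (Kdeg_nonneg S' pol')
  refine Real.sSup_le ?_ hK
  rintro _ ⟨a, -, α, -, rfl⟩
  change dM _ ((S.comp S').run α (S.ρ0 ⊗ₖ S'.ρ0)) ((S.comp S').run _ (S.ρ0 ⊗ₖ S'.ρ0)) ≤ _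
  rw [comp_run_kronecker hS hS' hC, comp_run_kronecker hS hS' hC]
  refine dM_comp_kronecker_le hS hS' (isDensity_run_restrict hS _) (isDensity_run_restrict hS _)
    (isDensity_run_restrict hS' _) (isDensity_run_restrict hS' _) hK (fun ha => ?_) (fun ha => ?_)
  · rw [S.restrict_purge_nabla_polUnion_left hcompat ha]
    exact (dM_le_Kdeg hS pol ha (S.valid_restrict α)).trans
      (le_add_of_nonneg_right (Kdeg_nonneg S' pol'))
  · rw [S'.restrict_purge_nabla_polUnion_right hcompat ha]
    exact (dM_le_Kdeg hS' pol' ha (S'.valid_restrict α)).trans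
      (le_add_of_nonneg_left (Kdeg_nonneg S pol))

/-- **Compositionality of security (unbounded time).** For quantum systems with disjoint
command sets and compatible policies,
`K(𝕊 ⊗ 𝕊′, ↝ ∪ ↝′) ≤ K(𝕊, ↝) + K(𝕊′, ↝′)`. -/
theorem compositionality_K {Agent Cmd : Type} {n n' : ℕ} (hn : 0 < n) (hn' : 0 < n')
    (S : QSystem Agent Cmd (Fin n)) (S' : QSystem Agent Cmd (Fin n'))
    (hS : S.WellFormed) (hS' : S'.WellFormed)
    (hC : S.C ∩ S'.C = ∅)
    (pol pol' : Agent → Agent → Prop)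
    (hpol : ∀ a ∈ S.A, pol a a) (hpol' : ∀ a ∈ S'.A, pol' a a)
    (hcompat : Compatible S.A S'.A pol pol') :
    Kdeg (S.comp S') (polUnion S.A S'.A pol pol') ≤ Kdeg S pol + Kdeg S' pol' :=
  compositionality_K_general S S' hS hS' hC pol pol' hcompat
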